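/- arXiv:2502.03006 — 2 statements merged into one kernel-verified Lean document; each statement's English description precedes it below -/
import Mathlib

section
/- (Loss evaluation of the backward-corrected PSI.) Let h > 0, t1 = t0 + h. Assume ∇ℓ is Lipschitz with constant c_l > 0 and bounded by B > 0 in Frobenius norm. Let U0, U1 ∈ ℝ^{m×r} and V0 ∈ ℝ^{n×r} have orthonormal columns, S0 ∈ ℝ^{r×r}, and set Y0 = U0 S0 V0ᵀ and S̄1 = U1ᵀ U0 S0. Let L : [t0,t1] → ℝ^{n×r} satisfy L'(t) = −∇ℓ(U1 L(t)ᵀ)ᵀU1 with L(t0) = V0 S̄1ᵀ, and set Y(t1) = U1 L(t1)ᵀ. Define αL := min_{s∈[t0,t1]} ‖∇ℓ(U1 L(s)ᵀ)ᵀU1‖ (assume the minimum is attained). Then ℓ(Y(t1)) ≤ ℓ(Y0) + B ‖(I − U1 U1ᵀ)Y0‖ + (c_l/2) ‖(I − U1 U1ᵀ)Y0‖² − h αL². -/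
open Matrix Set MeasureTheory Filter

attribute [local instance] Matrix.frobeniusNormedAddCommGroup Matrix.frobeniusNormedSpace

/-- The continuous linear functional `H ↦ ⟨G, H⟩ = tr(Gᵀ H)`, i.e. pairing with `G` in the
Frobenius inner product.  `hgrad : ∀ Y, HasFDerivAt ℓ (frobCLM (G Y)) Y` then states that
`G Y` is the gradient of `ℓ` at `Y` with respect to the Frobenius inner product. -/
noncomputable def frobCLM {m n : ℕ} (G : Matrix (Fin m) (Fin n) ℝ) :
    Matrix (Fin m) (Fin n) ℝ →L[ℝ] ℝ :=
  LinearMap.toContinuousLinearMap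
    { toFun := fun H => (Gᵀ * H).trace
      map_add' := by intro x y; simp [Matrix.mul_add]
      map_smul' := by intro c x; simp [Matrix.mul_smul] }

/-!
Along the L-step flow the loss decreases at rate `‖∇ℓ(U₁Lᵀ)ᵀU₁‖² ≥ αL²`, so over time `h` it
drops by at least `h αL²`. The flow starts at `U₁U₁ᵀY₀ = Y₀ - (I - U₁U₁ᵀ)Y₀`, and the descent
lemma for a gradient with Lipschitz constant `c_l`, together with `‖∇ℓ‖ ≤ B`, bounds the loss there
by `ℓ(Y₀) + B‖(I - U₁U₁ᵀ)Y₀‖ + (c_l/2)‖(I - U₁U₁ᵀ)Y₀‖²`.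
-/

theorem image_sub_le_mul_sub_of_hasDerivAt_le {f f' : ℝ → ℝ} {a b C : ℝ} (hab : a ≤ b)
    (hf : ∀ t ∈ Icc a b, HasDerivAt f (f' t) t) (hle : ∀ t ∈ Ioo a b, f' t ≤ C) :
    f b - f a ≤ C * (b - a) := by
  refine (convex_Icc a b).image_sub_le_mul_sub_of_deriv_le
    (fun t ht => (hf t ht).continuousAt.continuousWithinAt)
    (fun t ht => (hf t (interior_subset ht)).differentiableAt.differentiableWithinAt)
    (fun t ht => ?_) a (left_mem_Icc.2 hab) b (right_mem_Icc.2 hab) hab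
  rw [interior_Icc] at ht
  rw [(hf t (Ioo_subset_Icc_self ht)).deriv]
  exact hle t ht

/-- The descent lemma. -/
theorem le_add_fderiv_add_of_fderiv_sub_le {E : Type*} [NormedAddCommGroup E]
    [NormedSpace ℝ E] {f : E → ℝ} {f' : E → E →L[ℝ] ℝ} {K : ℝ}
    (hf : ∀ x, HasFDerivAt f (f' x) x) (hK : ∀ x y v, f' y v - f' x v ≤ K * ‖y - x‖ * ‖v‖)
    (x y : E) : f y ≤ f x + f' x (y - x) + K / 2 * ‖y - x‖ ^ 2 := by
  set d := y - x
  have hderiv : ∀ s : ℝ, HasDerivAt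
      (fun s : ℝ => f (x + s • d) - s * f' x d - K / 2 * s ^ 2 * ‖d‖ ^ 2)
      (f' (x + s • d) d - f' x d - K * s * ‖d‖ ^ 2) s := by
    intro s
    have hline : HasDerivAt (fun s : ℝ => x + s • d) d s := by
      simpa using ((hasDerivAt_id s).smul_const d).const_add x
    have hlin : HasDerivAt (fun s : ℝ => s * f' x d) (f' x d) s := by
      simpa using (hasDerivAt_id s).mul_const (f' x d)
    have hquad : HasDerivAt (fun s : ℝ => K / 2 * s ^ 2 * ‖d‖ ^ 2) (K * s * ‖d‖ ^ 2) s := by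
      refine (((hasDerivAt_pow 2 s).const_mul (K / 2)).mul_const (‖d‖ ^ 2)).congr_deriv ?_
      push_cast
      ring
    exact (((hf _).comp_hasDerivAt s hline).sub hlin).sub hquad
  have hslope : ∀ s ∈ Ioo (0 : ℝ) 1, f' (x + s • d) d - f' x d - K * s * ‖d‖ ^ 2 ≤ 0 := by
    intro s hs
    have := hK x (x + s • d) d
    rw [add_sub_cancel_left, norm_smul, Real.norm_of_nonneg hs.1.le] at this
    linarith
  have := image_sub_le_mul_sub_of_hasDerivAt_le zero_le_one (fun s _ => hderiv s) hslope
  simp only [zero_smul, add_zero, one_smul, zero_mul, one_pow, mul_one, zero_pow two_ne_zero,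
    mul_zero, sub_zero, one_mul] at this
  rw [add_sub_cancel x y] at this
  linarith

theorem HasDerivAt.const_mul_transpose {l m n : Type*} [Fintype l] [Fintype m] [Fintype n]
    (U : Matrix l n ℝ) {L : ℝ → Matrix m n ℝ} {D : Matrix m n ℝ} {t : ℝ}
    (hL : HasDerivAt L D t) : HasDerivAt (fun t => U * (L t)ᵀ) (U * Dᵀ) t :=
  ((mulLeftLinearMap m ℝ U).comp
    (transposeLinearEquiv m n ℝ ℝ).toLinearMap).toContinuousLinearMap.hasFDerivAt.comp_hasDerivAt
      t hL

namespace Matrix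

theorem frobenius_norm_eq_sqrt {m n : Type*} [Fintype m] [Fintype n] (A : Matrix m n ℝ) :
    ‖A‖ = √(∑ i, ∑ j, A i j ^ 2) := by
  rw [frobenius_norm_def, Real.sqrt_eq_rpow]
  simp only [Real.norm_eq_abs, Real.rpow_two, sq_abs]

theorem trace_transpose_mul_eq_sum {m n : Type*} [Fintype m] [Fintype n]
    (A B : Matrix m n ℝ) : (Aᵀ * B).trace = ∑ i, ∑ j, A i j * B i j := by
  rw [trace, Finset.sum_comm]
  simp [mul_apply]

end Matrix

section frobCLM

variable {m n : ℕ}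

theorem frobCLM_apply (G H : Matrix (Fin m) (Fin n) ℝ) : frobCLM G H = (Gᵀ * H).trace := rfl

theorem frobCLM_self (A : Matrix (Fin m) (Fin n) ℝ) : frobCLM A A = ‖A‖ ^ 2 := by
  rw [frobCLM_apply, trace_transpose_mul_eq_sum, frobenius_norm_eq_sqrt,
    Real.sq_sqrt (by positivity)]
  simp only [sq]

theorem frobCLM_apply_le (A H : Matrix (Fin m) (Fin n) ℝ) : frobCLM A H ≤ ‖A‖ * ‖H‖ := by
  rw [frobCLM_apply, trace_transpose_mul_eq_sum, frobenius_norm_eq_sqrt, frobenius_norm_eq_sqrt,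
    ← Real.sqrt_mul (by positivity)]
  refine (le_abs_self _).trans (Real.abs_le_sqrt ?_)
  simp only [← Finset.sum_product']
  exact Finset.sum_mul_sq_le_sq_mul_sq _ _ _

theorem frobCLM_sub (A B : Matrix (Fin m) (Fin n) ℝ) :
    frobCLM (A - B) = frobCLM A - frobCLM B := by
  ext H
  simp only [_root_.sub_apply, frobCLM_apply, transpose_sub, Matrix.sub_mul, trace_sub]

theorem frobCLM_mul_transpose {r : ℕ} (A : Matrix (Fin m) (Fin n) ℝ)
    (U : Matrix (Fin m) (Fin r) ℝ) (M : Matrix (Fin n) (Fin r) ℝ) :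
    frobCLM A (U * Mᵀ) = frobCLM (Aᵀ * U) M := by
  rw [frobCLM_apply, frobCLM_apply, ← trace_transpose]
  simp only [transpose_mul, transpose_transpose, Matrix.mul_assoc]
  rw [trace_mul_comm, Matrix.mul_assoc]

end frobCLM

section loss

variable {m n : ℕ} (ℓ : Matrix (Fin m) (Fin n) ℝ → ℝ)
  {G : Matrix (Fin m) (Fin n) ℝ → Matrix (Fin m) (Fin n) ℝ}

theorem loss_le_of_lipschitz_gradient (hgrad : ∀ Y, HasFDerivAt ℓ (frobCLM (G Y)) Y) {cl : ℝ}
    (hlip : ∀ Z1 Z2, ‖G Z1 - G Z2‖ ≤ cl * ‖Z1 - Z2‖) (Y Z : Matrix (Fin m) (Fin n) ℝ) :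
    ℓ Z ≤ ℓ Y + frobCLM (G Y) (Z - Y) + cl / 2 * ‖Z - Y‖ ^ 2 := by
  have hK : ∀ Z1 Z2 V, frobCLM (G Z2) V - frobCLM (G Z1) V ≤ cl * ‖Z2 - Z1‖ * ‖V‖ := by
    intro Z1 Z2 V
    rw [← _root_.sub_apply, ← frobCLM_sub]
    exact (frobCLM_apply_le _ V).trans (by gcongr; exact hlip Z2 Z1)
  exact le_add_fderiv_add_of_fderiv_sub_le hgrad hK Y Z

theorem loss_Lstep_le_sub_mul_sq (hgrad : ∀ Y, HasFDerivAt ℓ (frobCLM (G Y)) Y) {r : ℕ}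
    (U : Matrix (Fin m) (Fin r) ℝ) {L : ℝ → Matrix (Fin n) (Fin r) ℝ} {a b α : ℝ} (hab : a ≤ b)
    (hL : ∀ t ∈ Icc a b, HasDerivAt L (-((G (U * (L t)ᵀ))ᵀ * U)) t)
    (hα0 : 0 ≤ α) (hα : ∀ t ∈ Icc a b, α ≤ ‖(G (U * (L t)ᵀ))ᵀ * U‖) :
    ℓ (U * (L b)ᵀ) ≤ ℓ (U * (L a)ᵀ) - (b - a) * α ^ 2 := by
  have hderiv : ∀ t ∈ Icc a b, HasDerivAt (fun t => ℓ (U * (L t)ᵀ))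
      (-‖(G (U * (L t)ᵀ))ᵀ * U‖ ^ 2) t := by
    intro t ht
    have hval : frobCLM (G (U * (L t)ᵀ)) (U * (-((G (U * (L t)ᵀ))ᵀ * U))ᵀ) =
        -‖(G (U * (L t)ᵀ))ᵀ * U‖ ^ 2 := by
      rw [frobCLM_mul_transpose, map_neg, frobCLM_self]
    exact ((hgrad _).comp_hasDerivAt t ((hL t ht).const_mul_transpose U)).congr_deriv hval
  have := image_sub_le_mul_sub_of_hasDerivAt_le (C := -α ^ 2) hab hderiv
    fun t ht => neg_le_neg (pow_le_pow_left₀ hα0 (hα t (Ioo_subset_Icc_self ht)) 2)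
  linarith

end loss

theorem bcpsi_loss_evaluation_general {m n r : ℕ}
    (ℓ : Matrix (Fin m) (Fin n) ℝ → ℝ)
    (G : Matrix (Fin m) (Fin n) ℝ → Matrix (Fin m) (Fin n) ℝ)
    (hgrad : ∀ Y, HasFDerivAt ℓ (frobCLM (G Y)) Y)
    (cl B : ℝ)
    (hlip : ∀ Z1 Z2, ‖G Z1 - G Z2‖ ≤ cl * ‖Z1 - Z2‖)
    (hbound : ∀ Z, ‖G Z‖ ≤ B)
    (t0 t1 h : ℝ) (ht1 : t1 = t0 + h)
    (U0 : Matrix (Fin m) (Fin r) ℝ)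
    (U1 : Matrix (Fin m) (Fin r) ℝ)
    (V0 : Matrix (Fin n) (Fin r) ℝ)
    (S0 : Matrix (Fin r) (Fin r) ℝ)
    (L : ℝ → Matrix (Fin n) (Fin r) ℝ)
    (hL : ∀ t ∈ Set.Icc t0 t1, HasDerivAt L (-((G (U1 * (L t)ᵀ))ᵀ * U1)) t)
    (hL0 : L t0 = V0 * (U1ᵀ * U0 * S0)ᵀ)
    (αL : ℝ)
    (hαL : IsLeast ((fun s => ‖(G (U1 * (L s)ᵀ))ᵀ * U1‖) '' Set.Icc t0 t1) αL) :
    ℓ (U1 * (L t1)ᵀ) ≤ ℓ (U0 * S0 * V0ᵀ)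
      + B * ‖(1 - U1 * U1ᵀ) * (U0 * S0 * V0ᵀ)‖
      + cl / 2 * ‖(1 - U1 * U1ᵀ) * (U0 * S0 * V0ᵀ)‖ ^ 2
      - h * αL ^ 2 := by
  subst ht1
  set Y0 := U0 * S0 * V0ᵀ
  set D := (1 - U1 * U1ᵀ) * Y0
  obtain ⟨s, ⟨hs0, hs1⟩, hsα⟩ := hαL.1
  have hflow := loss_Lstep_le_sub_mul_sq ℓ hgrad U1 (hs0.trans hs1) hL (hsα ▸ norm_nonneg _)
    fun t ht => hαL.2 ⟨t, ht, rfl⟩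
  have hstart : U1 * (L t0)ᵀ = Y0 - D := by
    simp only [D, hL0, Matrix.sub_mul, Matrix.one_mul, sub_sub_cancel, transpose_mul,
      transpose_transpose, Matrix.mul_assoc, Y0]
  have hdesc := loss_le_of_lipschitz_gradient ℓ hgrad hlip Y0 (Y0 - D)
  have hfirst : frobCLM (G Y0) (-D) ≤ B * ‖D‖ :=
    calc frobCLM (G Y0) (-D) ≤ ‖G Y0‖ * ‖-D‖ := frobCLM_apply_le _ _
      _ ≤ B * ‖D‖ := by rw [norm_neg]; exact mul_le_mul_of_nonneg_right (hbound _) (norm_nonneg D)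
  rw [sub_sub_cancel_left, norm_neg] at hdesc
  rw [hstart, add_sub_cancel_left] at hflow
  linarith

/-- Loss evaluation of the backward-corrected PSI: with `Y0 = U0 S0 V0ᵀ`,
`S̄1 = U1ᵀ U0 S0`, and the L-step started at `V0 S̄1ᵀ`,
`ℓ(Y(t1)) ≤ ℓ(Y0) + B‖(I − U1U1ᵀ)Y0‖ + (c_l/2)‖(I − U1U1ᵀ)Y0‖² − h αL²`. -/
theorem bcpsi_loss_evaluation {m n r : ℕ}
    (ℓ : Matrix (Fin m) (Fin n) ℝ → ℝ)
    (G : Matrix (Fin m) (Fin n) ℝ → Matrix (Fin m) (Fin n) ℝ)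
    (hgrad : ∀ Y, HasFDerivAt ℓ (frobCLM (G Y)) Y)
    (cl B : ℝ) (hcl : 0 < cl) (hB : 0 < B)
    (hlip : ∀ Z1 Z2, ‖G Z1 - G Z2‖ ≤ cl * ‖Z1 - Z2‖)
    (hbound : ∀ Z, ‖G Z‖ ≤ B)
    (t0 t1 h : ℝ) (hh : 0 < h) (ht1 : t1 = t0 + h)
    (U0 : Matrix (Fin m) (Fin r) ℝ) (hU0 : U0ᵀ * U0 = 1)
    (U1 : Matrix (Fin m) (Fin r) ℝ) (hU1 : U1ᵀ * U1 = 1)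
    (V0 : Matrix (Fin n) (Fin r) ℝ) (hV0 : V0ᵀ * V0 = 1)
    (S0 : Matrix (Fin r) (Fin r) ℝ)
    (L : ℝ → Matrix (Fin n) (Fin r) ℝ)
    (hL : ∀ t ∈ Set.Icc t0 t1, HasDerivAt L (-((G (U1 * (L t)ᵀ))ᵀ * U1)) t)
    (hL0 : L t0 = V0 * (U1ᵀ * U0 * S0)ᵀ)
    (αL : ℝ)
    (hαL : IsLeast ((fun s => ‖(G (U1 * (L s)ᵀ))ᵀ * U1‖) '' Set.Icc t0 t1) αL) :
    ℓ (U1 * (L t1)ᵀ) ≤ ℓ (U0 * S0 * V0ᵀ)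
      + B * ‖(1 - U1 * U1ᵀ) * (U0 * S0 * V0ᵀ)‖
      + cl / 2 * ‖(1 - U1 * U1ᵀ) * (U0 * S0 * V0ᵀ)‖ ^ 2
      - h * αL ^ 2 :=
  bcpsi_loss_evaluation_general ℓ G hgrad cl B hlip hbound t0 t1 h ht1 U0 U1 V0 S0 L hL hL0 αL hαL
end

section
/- (Local robust error bound of the abc-PSI, before truncation.) Let h > 0, t1 = t0 + h. Assume ∇ℓ is Lipschitz with constant c_l > 0 and bounded by B > 0 in Frobenius norm. Let U0 ∈ ℝ^{m×r}, V0 ∈ ℝ^{n×r} have orthonormal columns, S0 ∈ ℝ^{r×r}, Y0 = U0 S0 V0ᵀ, and assume the residual bound ‖∇ℓ(Y0) − P(Y0)∇ℓ(Y0)‖ ≤ ε, where P(Y0)G = U0U0ᵀG − U0U0ᵀG V0V0ᵀ + G V0V0ᵀ. Let W : [t0,t1] → ℝ^{m×n} satisfy the full gradient flow W'(t) = −∇ℓ(W(t)) with W(t0) = Y0. Let K : [t0,t1] → ℝ^{m×r} satisfy K'(t) = −∇ℓ(K(t)V0ᵀ)V0 with K(t0) = U0 S0; let Û1 ∈ ℝ^{m×2r}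 have orthonormal columns with Û1 Û1ᵀ U0 = U0 and Û1 Û1ᵀ K(t1) = K(t1); and let L : [t0,t1] → ℝ^{n×2r} satisfy L'(t) = −∇ℓ(Û1 L(t)ᵀ)ᵀ Û1 with L(t0) = V0 S0ᵀ U0ᵀ Û1. Then the one-step abc-PSI output Ŷ1 := Û1 L(t1)ᵀ satisfies ‖Ŷ1 − W(t1)‖ ≤ 3 c_l B h² + h ε. -/
open Matrix Set MeasureTheory Filter

attribute [local instance] Matrix.frobeniusNormedAddCommGroup Matrix.frobeniusNormedSpace

/-!
Write `P̂ = Û Ûᵀ`. The L-step integrates `Ŷ' = -P̂ G(Ŷ)` from `Y0`, so `Ŷ - W` has derivative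
`G(W) - P̂ G(Ŷ)`; as both flows move at speed at most `B`, this differs from the normal part
`(1 - P̂) G(Y0)` by at most `2 c_l B h`. Since `Û` contains the range of `U0`, `(1 - P̂) G(Y0)` is
`(1 - P̂)` of the residual `G(Y0) - P(Y0) G(Y0)` (norm at most `ε`) plus `(1 - P̂) G(Y0) V0 V0ᵀ`.
The latter is at most `c_l B h`: `(1 - P̂) K` vanishes at `t0` and `t1`, while
`K' = -G(K V0ᵀ) V0` stays within `c_l B h` of `-G(Y0) V0`. Integrating over `[t0, t1]` gives
`h (3 c_l B h + ε)`.
-/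

open scoped NNReal

namespace Matrix

variable {ι κ μ : Type*} [Fintype ι] [Fintype κ] [Fintype μ]

theorem frobenius_norm_sq_eq_trace (A : Matrix ι κ ℝ) : ‖A‖ ^ 2 = (Aᵀ * A).trace := by
  rw [frobenius_norm_def, ← Real.sqrt_eq_rpow, Real.sq_sqrt (by positivity), trace,
    Finset.sum_comm]
  simp [diag, mul_apply, sq]

section orthonormal

variable [DecidableEq κ] {Q : Matrix ι κ ℝ}

theorem frobenius_norm_mul_of_transpose_mul_self (hQ : Qᵀ * Q = 1) (N : Matrix κ μ ℝ) :
    ‖Q * N‖ = ‖N‖ := by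
  have h : ‖Q * N‖ ^ 2 = ‖N‖ ^ 2 := by
    rw [frobenius_norm_sq_eq_trace, frobenius_norm_sq_eq_trace, transpose_mul, Matrix.mul_assoc,
      ← Matrix.mul_assoc Qᵀ, hQ, Matrix.one_mul]
  exact (pow_left_inj₀ (norm_nonneg _) (norm_nonneg _) two_ne_zero).mp h

theorem frobenius_norm_mul_transpose_of_transpose_mul_self (hQ : Qᵀ * Q = 1)
    (N : Matrix μ κ ℝ) : ‖N * Qᵀ‖ = ‖N‖ := by
  rw [← frobenius_norm_transpose, transpose_mul, transpose_transpose,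
    frobenius_norm_mul_of_transpose_mul_self hQ, frobenius_norm_transpose]

theorem frobenius_norm_sq_eq_proj_add_sub_proj (hQ : Qᵀ * Q = 1) (M : Matrix ι μ ℝ) :
    ‖M‖ ^ 2 = ‖Q * (Qᵀ * M)‖ ^ 2 + ‖M - Q * (Qᵀ * M)‖ ^ 2 := by
  have hproj : (Q * (Qᵀ * M))ᵀ * (Q * (Qᵀ * M)) = Mᵀ * (Q * (Qᵀ * M)) := by
    simp only [transpose_mul, transpose_transpose, Matrix.mul_assoc]
    rw [← Matrix.mul_assoc Qᵀ Q, hQ, Matrix.one_mul]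
  have hsymm : (Q * (Qᵀ * M))ᵀ * M = Mᵀ * (Q * (Qᵀ * M)) := by
    simp only [transpose_mul, transpose_transpose, Matrix.mul_assoc]
  simp only [frobenius_norm_sq_eq_trace, transpose_sub, Matrix.sub_mul, Matrix.mul_sub, hproj,
    hsymm, trace_sub]
  ring

theorem frobenius_norm_proj_le (hQ : Qᵀ * Q = 1) (M : Matrix ι μ ℝ) :
    ‖Q * (Qᵀ * M)‖ ≤ ‖M‖ :=
  le_of_sq_le_sq (by nlinarith [frobenius_norm_sq_eq_proj_add_sub_proj hQ M]) (norm_nonneg _)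

theorem frobenius_norm_sub_proj_le (hQ : Qᵀ * Q = 1) (M : Matrix ι μ ℝ) :
    ‖M - Q * (Qᵀ * M)‖ ≤ ‖M‖ :=
  le_of_sq_le_sq (by nlinarith [frobenius_norm_sq_eq_proj_add_sub_proj hQ M]) (norm_nonneg _)

theorem frobenius_norm_mul_le_of_transpose_mul_self (hQ : Qᵀ * Q = 1) (M : Matrix μ ι ℝ) :
    ‖M * Q‖ ≤ ‖M‖ := by
  rw [← frobenius_norm_transpose, transpose_mul, ← frobenius_norm_mul_of_transpose_mul_self hQ,
    ← frobenius_norm_transpose M]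
  exact frobenius_norm_proj_le hQ Mᵀ

end orthonormal

end Matrix

section derivative

variable {ι κ μ : Type*} [Fintype ι] [Fintype κ] [Fintype μ]
  {f : ℝ → Matrix κ μ ℝ} {f' : Matrix κ μ ℝ} {t : ℝ}

theorem HasDerivAt.const_matrix_mul (A : Matrix ι κ ℝ) (hf : HasDerivAt f f' t) :
    HasDerivAt (fun u => A * f u) (A * f') t :=
  (mulLeftLinearMap μ ℝ A).toContinuousLinearMap.hasFDerivAt.comp_hasDerivAt t hf

theorem HasDerivAt.matrix_mul_const (hf : HasDerivAt f f' t) (A : Matrix μ ι ℝ) :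
    HasDerivAt (fun u => f u * A) (f' * A) t :=
  (mulRightLinearMap κ ℝ A).toContinuousLinearMap.hasFDerivAt.comp_hasDerivAt t hf

theorem HasDerivAt.matrix_transpose (hf : HasDerivAt f f' t) :
    HasDerivAt (fun u => (f u)ᵀ) f'ᵀ t :=
  (transposeLinearEquiv κ μ ℝ ℝ).toLinearMap.toContinuousLinearMap.hasFDerivAt.comp_hasDerivAt t
    hf

end derivative

section flow

variable {E F : Type*} [NormedAddCommGroup E] [NormedSpace ℝ E] [NormedAddCommGroup F]
  {f f' : ℝ → E} {a b t : ℝ}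

theorem norm_sub_le_of_hasDerivAt_of_norm_le {C : ℝ}
    (hf : ∀ s ∈ Icc a b, HasDerivAt f (f' s) s) (hC : ∀ s ∈ Icc a b, ‖f' s‖ ≤ C)
    (ht : t ∈ Icc a b) : ‖f t - f a‖ ≤ C * (t - a) :=
  norm_image_sub_le_of_norm_deriv_le_segment' (fun s hs => (hf s hs).hasDerivWithinAt)
    (fun s hs => hC s (Ico_subset_Icc_self hs)) t ht

theorem LipschitzWith.norm_sub_le_of_hasDerivAt {G : E → F} {c : ℝ≥0} (hG : LipschitzWith c G)
    {B : ℝ} (hf : ∀ s ∈ Icc a b, HasDerivAt f (f' s) s) (hB : ∀ s ∈ Icc a b, ‖f' s‖ ≤ B)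
    (ht : t ∈ Icc a b) : ‖G (f t) - G (f a)‖ ≤ c * B * (b - a) :=
  calc ‖G (f t) - G (f a)‖ ≤ c * ‖f t - f a‖ := hG.norm_sub_le _ _
    _ ≤ c * (B * (t - a)) := by
      gcongr; exact norm_sub_le_of_hasDerivAt_of_norm_le hf hB ht
    _ ≤ c * B * (b - a) := by
      have : 0 ≤ B := (norm_nonneg _).trans (hB t ht)
      rw [← mul_assoc]; gcongr; exact ht.2

end flow

section lowRank

variable {ι κ μ ν : Type*} [Fintype ι] [Fintype κ] [Fintype μ] [Fintype ν] [DecidableEq ν]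
  {Q : Matrix ι ν ℝ}

def tangentProj (U : Matrix ι κ ℝ) (V : Matrix μ κ ℝ) (M : Matrix ι μ ℝ) : Matrix ι μ ℝ :=
  U * Uᵀ * M - U * Uᵀ * M * (V * Vᵀ) + M * (V * Vᵀ)

theorem frobenius_norm_sub_proj_le_add (hQ : Qᵀ * Q = 1) (X Y M : Matrix ι μ ℝ) :
    ‖X - Q * (Qᵀ * Y)‖ ≤ ‖X - M‖ + ‖Y - M‖ + ‖M - Q * (Qᵀ * M)‖ := by
  have hsplit : X - Q * (Qᵀ * Y) = (X - M) - Q * (Qᵀ * (Y - M)) + (M - Q * (Qᵀ * M)) := by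
    simp only [Matrix.mul_sub]; abel
  rw [hsplit]
  grw [norm_add_le, norm_sub_le, Matrix.frobenius_norm_proj_le hQ]

theorem frobenius_norm_sub_proj_le_tangentProj [DecidableEq κ] (hQ : Qᵀ * Q = 1)
    {U : Matrix ι κ ℝ} (hQU : Q * Qᵀ * U = U) {V : Matrix μ κ ℝ} (hV : Vᵀ * V = 1)
    (M : Matrix ι μ ℝ) :
    ‖M - Q * (Qᵀ * M)‖ ≤ ‖M - tangentProj U V M‖ + ‖M * V - Q * (Qᵀ * (M * V))‖ := by
  set R := M - tangentProj U V M
  have hQU' : ∀ X : Matrix κ μ ℝ, Q * (Qᵀ * (U * X)) = U * X := fun X => by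
    rw [← Matrix.mul_assoc Qᵀ, ← Matrix.mul_assoc, ← Matrix.mul_assoc Q, hQU]
  have hsplit : M - Q * (Qᵀ * M) = (R - Q * (Qᵀ * R)) + (M * V - Q * (Qᵀ * (M * V))) * Vᵀ := by
    simp only [R, tangentProj, Matrix.mul_sub, Matrix.mul_add, Matrix.sub_mul, Matrix.mul_assoc,
      hQU']
    abel
  rw [hsplit, ← Matrix.frobenius_norm_mul_transpose_of_transpose_mul_self hV
    (M * V - Q * (Qᵀ * (M * V)))]
  grw [norm_add_le, Matrix.frobenius_norm_sub_proj_le hQ]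

theorem frobenius_norm_sub_proj_grad_mul_le [DecidableEq κ] {G : Matrix ι μ ℝ → Matrix ι μ ℝ}
    {c : ℝ≥0} (hG : LipschitzWith c G) {B : ℝ} (hGB : ∀ Z, ‖G Z‖ ≤ B)
    {V : Matrix μ κ ℝ} (hV : Vᵀ * V = 1) (hQ : Qᵀ * Q = 1)
    {K : ℝ → Matrix ι κ ℝ} {a b : ℝ} (hab : a < b)
    (hK : ∀ t ∈ Icc a b, HasDerivAt K (-(G (K t * Vᵀ) * V)) t)
    (hKa : Q * Qᵀ * K a = K a) (hKb : Q * Qᵀ * K b = K b) :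
    ‖G (K a * Vᵀ) * V - Q * (Qᵀ * (G (K a * Vᵀ) * V))‖ ≤ c * B * (b - a) := by
  set C := G (K a * Vᵀ) * V - Q * (Qᵀ * (G (K a * Vᵀ) * V))
  set D : ℝ → Matrix ι κ ℝ := fun t => G (K a * Vᵀ) * V - G (K t * Vᵀ) * V
  -- `(1 - Q Qᵀ) K` vanishes at `a` and `b`, so `g` gains `(b - a) • C` at a rate `O(b - a)`
  set g : ℝ → Matrix ι κ ℝ := fun t => (K t - Q * (Qᵀ * K t)) + (t - a) • C
  have hg : ∀ t ∈ Icc a b, HasDerivAt g (D t - Q * (Qᵀ * D t)) t := by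
    intro t ht
    have hlin : HasDerivAt (fun u : ℝ => (u - a) • C) C t :=
      (((hasDerivAt_id t).sub_const a).smul_const C).congr_deriv (one_smul ℝ C)
    refine (((hK t ht).sub (((hK t ht).const_matrix_mul Qᵀ).const_matrix_mul Q)).add
      hlin).congr_deriv ?_
    simp only [D, C, Matrix.mul_sub, Matrix.mul_neg]
    abel
  have hKV : ∀ t ∈ Icc a b,
      HasDerivAt (fun u => K u * Vᵀ) (-(G (K t * Vᵀ) * V) * Vᵀ) t :=
    fun t ht => (hK t ht).matrix_mul_const Vᵀ
  have hD : ∀ t ∈ Icc a b, ‖D t - Q * (Qᵀ * D t)‖ ≤ c * B * (b - a) := by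
    intro t ht
    grw [Matrix.frobenius_norm_sub_proj_le hQ]
    simp only [D, ← Matrix.sub_mul]
    grw [Matrix.frobenius_norm_mul_le_of_transpose_mul_self hV, norm_sub_rev]
    refine hG.norm_sub_le_of_hasDerivAt (f := fun u => K u * Vᵀ) hKV (fun s _ => ?_) ht
    rw [Matrix.frobenius_norm_mul_transpose_of_transpose_mul_self hV, norm_neg]
    exact (Matrix.frobenius_norm_mul_le_of_transpose_mul_self hV _).trans (hGB _)
  have hgb := norm_sub_le_of_hasDerivAt_of_norm_le hg hD ⟨hab.le, le_rfl⟩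
  have hga : g a = 0 := by simp [g, ← Matrix.mul_assoc, hKa]
  have hgb' : g b = (b - a) • C := by simp [g, ← Matrix.mul_assoc, hKb]
  rw [hga, hgb', sub_zero, norm_smul, Real.norm_of_nonneg (sub_nonneg.mpr hab.le), mul_comm]
    at hgb
  exact le_of_mul_le_mul_right hgb (sub_pos.mpr hab)

end lowRank

theorem abcpsi_local_error_bound_general {m n r : ℕ}
    (G : Matrix (Fin m) (Fin n) ℝ → Matrix (Fin m) (Fin n) ℝ)
    (cl B ε : ℝ) (hcl : 0 < cl)
    (hlip : ∀ Z1 Z2, ‖G Z1 - G Z2‖ ≤ cl * ‖Z1 - Z2‖)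
    (hbound : ∀ Z, ‖G Z‖ ≤ B)
    (t0 t1 h : ℝ) (hh : 0 < h) (ht1 : t1 = t0 + h)
    (U0 : Matrix (Fin m) (Fin r) ℝ)
    (V0 : Matrix (Fin n) (Fin r) ℝ) (hV0 : V0ᵀ * V0 = 1)
    (S0 : Matrix (Fin r) (Fin r) ℝ)
    -- residual bound at Y0 = U0 S0 V0ᵀ
    (hres : ‖G (U0 * S0 * V0ᵀ) -
        (U0 * U0ᵀ * G (U0 * S0 * V0ᵀ) - U0 * U0ᵀ * G (U0 * S0 * V0ᵀ) * (V0 * V0ᵀ)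
          + G (U0 * S0 * V0ᵀ) * (V0 * V0ᵀ))‖ ≤ ε)
    -- full gradient flow
    (W : ℝ → Matrix (Fin m) (Fin n) ℝ)
    (hW : ∀ t ∈ Set.Icc t0 t1, HasDerivAt W (-(G (W t))) t)
    (hW0 : W t0 = U0 * S0 * V0ᵀ)
    -- K-step
    (K : ℝ → Matrix (Fin m) (Fin r) ℝ)
    (hK : ∀ t ∈ Set.Icc t0 t1, HasDerivAt K (-(G (K t * V0ᵀ) * V0)) t)
    (hK0 : K t0 = U0 * S0)
    -- augmented basis
    (Uhat1 : Matrix (Fin m) (Fin (2 * r)) ℝ) (hUhat1 : Uhat1ᵀ * Uhat1 = 1)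
    (hspanU0 : Uhat1 * Uhat1ᵀ * U0 = U0)
    (hspanK : Uhat1 * Uhat1ᵀ * K t1 = K t1)
    -- L-step
    (L : ℝ → Matrix (Fin n) (Fin (2 * r)) ℝ)
    (hL : ∀ t ∈ Set.Icc t0 t1, HasDerivAt L (-((G (Uhat1 * (L t)ᵀ))ᵀ * Uhat1)) t)
    (hL0 : L t0 = V0 * S0ᵀ * U0ᵀ * Uhat1) :
    ‖Uhat1 * (L t1)ᵀ - W t1‖ ≤ 3 * cl * B * h ^ 2 + h * ε := by
  have hcl' : (cl.toNNReal : ℝ) = cl := Real.coe_toNNReal _ hcl.le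
  have hG : LipschitzWith cl.toNNReal G :=
    LipschitzWith.of_dist_le_mul fun Z1 Z2 => by simpa [dist_eq_norm, hcl'] using hlip Z1 Z2
  have hh' : t1 - t0 = h := by linarith
  have hY0 : K t0 * V0ᵀ = U0 * S0 * V0ᵀ := by rw [hK0]
  set Y0 := U0 * S0 * V0ᵀ
  set Yhat : ℝ → Matrix (Fin m) (Fin n) ℝ := fun t => Uhat1 * (L t)ᵀ
  have hYhat : ∀ t ∈ Icc t0 t1, HasDerivAt Yhat (-(Uhat1 * (Uhat1ᵀ * G (Yhat t)))) t :=
    fun t ht => ((hL t ht).matrix_transpose.const_matrix_mul Uhat1).congr_deriv (by simp [Yhat])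
  have hYhat0 : Yhat t0 = Y0 := by
    simp [Yhat, Y0, hL0, transpose_mul, ← Matrix.mul_assoc, hspanU0]
  have hWdrift : ∀ t ∈ Icc t0 t1, ‖G (W t) - G Y0‖ ≤ cl * B * h := fun t ht => by
    simpa [hW0, hh', hcl'] using
      hG.norm_sub_le_of_hasDerivAt hW (fun s _ => (norm_neg _).trans_le (hbound _)) ht
  have hYdrift : ∀ t ∈ Icc t0 t1, ‖G (Yhat t) - G Y0‖ ≤ cl * B * h := fun t ht => by
    simpa [hYhat0, hh', hcl'] using hG.norm_sub_le_of_hasDerivAt hYhat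
      (fun s _ => (norm_neg _).trans_le ((frobenius_norm_proj_le hUhat1 _).trans (hbound _))) ht
  have hKstep : ‖G Y0 * V0 - Uhat1 * (Uhat1ᵀ * (G Y0 * V0))‖ ≤ cl * B * h := by
    simpa [hY0, hh', hcl'] using frobenius_norm_sub_proj_grad_mul_le hG hbound hV0 hUhat1
      (by linarith) hK (by rw [hK0, ← Matrix.mul_assoc, hspanU0]) hspanK
  have hnormal : ‖G Y0 - Uhat1 * (Uhat1ᵀ * G Y0)‖ ≤ ε + cl * B * h :=
    (frobenius_norm_sub_proj_le_tangentProj hUhat1 hspanU0 hV0 _).trans (add_le_add hres hKstep)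
  have hspeed : ∀ t ∈ Icc t0 t1,
      ‖-(Uhat1 * (Uhat1ᵀ * G (Yhat t))) - -G (W t)‖ ≤ 3 * cl * B * h + ε := fun t ht => by
    rw [neg_sub_neg]
    grw [frobenius_norm_sub_proj_le_add hUhat1 _ _ (G Y0), hWdrift t ht, hYdrift t ht, hnormal]
    linarith
  have herr := norm_sub_le_of_hasDerivAt_of_norm_le (f := fun t => Yhat t - W t)
    (fun t ht => (hYhat t ht).sub (hW t ht)) hspeed ⟨by linarith, le_rfl⟩
  rw [hYhat0, hW0, sub_self, sub_zero, hh'] at herr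
  linarith

/-- Local robust error bound of the abc-PSI, before truncation:
`‖Ŷ1 − W(t1)‖ ≤ 3 c_l B h² + h ε`, where `Ŷ1 = Û1 L(t1)ᵀ` is the one-step abc-PSI output
and `W` solves the full gradient flow started at `Y0 = U0 S0 V0ᵀ`. -/
theorem abcpsi_local_error_bound {m n r : ℕ}
    (ℓ : Matrix (Fin m) (Fin n) ℝ → ℝ)
    (G : Matrix (Fin m) (Fin n) ℝ → Matrix (Fin m) (Fin n) ℝ)
    (hgrad : ∀ Y, HasFDerivAt ℓ (frobCLM (G Y)) Y)
    (cl B ε : ℝ) (hcl : 0 < cl) (hB : 0 < B)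
    (hlip : ∀ Z1 Z2, ‖G Z1 - G Z2‖ ≤ cl * ‖Z1 - Z2‖)
    (hbound : ∀ Z, ‖G Z‖ ≤ B)
    (t0 t1 h : ℝ) (hh : 0 < h) (ht1 : t1 = t0 + h)
    (U0 : Matrix (Fin m) (Fin r) ℝ) (hU0 : U0ᵀ * U0 = 1)
    (V0 : Matrix (Fin n) (Fin r) ℝ) (hV0 : V0ᵀ * V0 = 1)
    (S0 : Matrix (Fin r) (Fin r) ℝ)
    -- residual bound at Y0 = U0 S0 V0ᵀ
    (hres : ‖G (U0 * S0 * V0ᵀ) -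
        (U0 * U0ᵀ * G (U0 * S0 * V0ᵀ) - U0 * U0ᵀ * G (U0 * S0 * V0ᵀ) * (V0 * V0ᵀ)
          + G (U0 * S0 * V0ᵀ) * (V0 * V0ᵀ))‖ ≤ ε)
    -- full gradient flow
    (W : ℝ → Matrix (Fin m) (Fin n) ℝ)
    (hW : ∀ t ∈ Set.Icc t0 t1, HasDerivAt W (-(G (W t))) t)
    (hW0 : W t0 = U0 * S0 * V0ᵀ)
    -- K-step
    (K : ℝ → Matrix (Fin m) (Fin r) ℝ)
    (hK : ∀ t ∈ Set.Icc t0 t1, HasDerivAt K (-(G (K t * V0ᵀ) * V0)) t)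
    (hK0 : K t0 = U0 * S0)
    -- augmented basis
    (Uhat1 : Matrix (Fin m) (Fin (2 * r)) ℝ) (hUhat1 : Uhat1ᵀ * Uhat1 = 1)
    (hspanU0 : Uhat1 * Uhat1ᵀ * U0 = U0)
    (hspanK : Uhat1 * Uhat1ᵀ * K t1 = K t1)
    -- L-step
    (L : ℝ → Matrix (Fin n) (Fin (2 * r)) ℝ)
    (hL : ∀ t ∈ Set.Icc t0 t1, HasDerivAt L (-((G (Uhat1 * (L t)ᵀ))ᵀ * Uhat1)) t)
    (hL0 : L t0 = V0 * S0ᵀ * U0ᵀ * Uhat1) :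
    ‖Uhat1 * (L t1)ᵀ - W t1‖ ≤ 3 * cl * B * h ^ 2 + h * ε :=
  abcpsi_local_error_bound_general G cl B ε hcl hlip hbound t0 t1 h hh ht1 U0 V0 hV0 S0 hres W hW
    hW0 K hK hK0 Uhat1 hUhat1 hspanU0 hspanK L hL hL0
end
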